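/- arXiv:0901.2042 — 4 statements merged into one kernel-verified Lean document; each statement's English description precedes it below -/
import Mathlib

section
/- Let σ₁ and σ₂ be nonnegative, continuous, integrable functions on (0,1) such that σ₁ majorizes σ₂. Then for every average SNR ρ ≥ 0 and every bandwidth W > 0, the average rate with no CSI at the transmitter satisfies C_no(σ₁,ρ,W) ≤ C_no(σ₂,ρ,W); i.e., the functional σ ↦ C_no(σ,ρ,W) is Schur-concave with respect to the spectral fading variance σ. -/
/-!
On `(0,1)`, `σ` and its decreasing rearrangement `σ*` have the same distribution function, hence
the same law, so `C_no` only sees `σ*`: `C_no = W ∫ G(σ*)` with `G a = E log(1 + k a z)`,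
`k = ρ / W`. `G` is concave, so `G(σ₁*) - G(σ₂*) ≤ ψ (σ₁* - σ₂*)` with `ψ = G'(σ₂*)`, which is
increasing in `t` and takes values in `[0, k]`. Writing `ψ t = ∫₀ᵏ 1{u < ψ t} du` and using
Fubini, `∫ ψ (σ₁* - σ₂*)` becomes an integral over `u` of the integrals of `σ₁* - σ₂*` over the
superlevel sets `{ψ > u}`. These are intervals `(a,1)` up to a point, and majorization says
exactly that `σ₁* - σ₂*` has nonpositive integral over every such interval.
-/

open MeasureTheory Real Set

/-- Distribution function of a measurable function on (0,1):
`d_x(s) = μ({t ∈ (0,1) : x(t) > s})`. -/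
noncomputable def distFun (x : ℝ → ℝ) (s : ℝ) : ℝ :=
  (volume {t | t ∈ Ioo (0 : ℝ) 1 ∧ x t > s}).toReal

/-- Decreasing rearrangement: `x*(t) = inf {s : d_x(s) ≤ t}`. -/
noncomputable def decRearr (x : ℝ → ℝ) (t : ℝ) : ℝ :=
  sInf {s : ℝ | distFun x s ≤ t}

/-- `x` majorizes `y` on (0,1): partial integrals of the decreasing rearrangements are
ordered and the total integrals coincide. -/
def Majorizes (x y : ℝ → ℝ) : Prop :=
  (∀ s ∈ Ico (0 : ℝ) 1,
      (∫ t in Ioo (0 : ℝ) s, decRearr y t) ≤ ∫ t in Ioo (0 : ℝ) s, decRearr x t) ∧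
    (∫ t in Ioo (0 : ℝ) 1, decRearr x t) = ∫ t in Ioo (0 : ℝ) 1, decRearr y t

/-- Average rate with no CSI at the transmitter (equal power allocation):
`C_no(σ,ρ,W) = W ∫₀¹ E_z[log(1 + (ρ/W) σ(f) z)] df`, with `z` exponential of mean one. -/
noncomputable def Cno (σ : ℝ → ℝ) (ρ W : ℝ) : ℝ :=
  W * ∫ f in Ioo (0 : ℝ) 1,
    ∫ z in Ioi (0 : ℝ), Real.log (1 + (ρ / W) * σ f * z) * Real.exp (-z)

open ProbabilityTheory Filter

instance : IsProbabilityMeasure (volume.restrict (Ioo (0 : ℝ) 1)) := ⟨by simp⟩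

namespace ProbabilityTheory

lemma cdf_map_eq_one_sub {α : Type*} [MeasurableSpace α] {μ : Measure α}
    [IsProbabilityMeasure μ] {f : α → ℝ} (hf : AEMeasurable f μ) (s : ℝ) :
    cdf (μ.map f) s = 1 - μ.real (f ⁻¹' Ioi s) := by
  have := Measure.isProbabilityMeasure_map hf
  rw [cdf_eq_real, ← compl_Ioi, measureReal_compl measurableSet_Ioi, probReal_univ,
    measureReal_def, measureReal_def, Measure.map_apply_of_aemeasurable hf measurableSet_Ioi]

variable {μ : Measure ℝ} {c : ℝ}

lemma bddBelow_setOf_le_cdf (hc : 0 < c) : BddBelow {s | c ≤ cdf μ s} := by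
  obtain ⟨s₀, hs₀⟩ :=
    ((tendsto_cdf_atBot μ).eventually (gt_mem_nhds hc)).exists_forall_of_atBot
  exact ⟨s₀, fun s hs => le_of_not_gt fun h => (hs₀ s h.le).not_ge hs⟩

lemma nonempty_setOf_le_cdf (hc : c < 1) : {s | c ≤ cdf μ s}.Nonempty :=
  ((tendsto_cdf_atTop μ).eventually (lt_mem_nhds hc)).exists.imp fun _ => le_of_lt

lemma lt_sInf_setOf_le_cdf_iff (hc₀ : 0 < c) (hc₁ : c < 1) (s : ℝ) :
    s < sInf {s | c ≤ cdf μ s} ↔ cdf μ s < c := by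
  refine ⟨fun hs => lt_of_not_ge fun h => (csInf_le (bddBelow_setOf_le_cdf hc₀) h).not_gt hs,
    fun hs => ?_⟩
  obtain ⟨s', hs', hss'⟩ := ((((cdf μ).right_continuous s).eventually (gt_mem_nhds hs)).filter_mono
      (nhdsWithin_mono _ Ioi_subset_Ici_self) |>.and self_mem_nhdsWithin).exists
  refine hss'.trans_le (le_csInf (nonempty_setOf_le_cdf hc₁) fun r hr => ?_)
  exact le_of_not_gt fun h => (hr.trans (monotone_cdf μ h.le)).not_gt hs'

end ProbabilityTheory

section Rearrangement

local notation "μI" => volume.restrict (Ioo (0 : ℝ) 1)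

variable {x : ℝ → ℝ}

lemma distFun_eq_measureReal (x : ℝ → ℝ) (s : ℝ) :
    distFun x s = Measure.real μI (x ⁻¹' Ioi s) := by
  rw [distFun, measureReal_def, Measure.restrict_apply' measurableSet_Ioo, inter_comm]
  rfl

lemma distFun_nonneg (x : ℝ → ℝ) (s : ℝ) : 0 ≤ distFun x s := ENNReal.toReal_nonneg

lemma distFun_le_one (x : ℝ → ℝ) (s : ℝ) : distFun x s ≤ 1 := by
  rw [distFun_eq_measureReal]
  exact measureReal_le_one

lemma lt_decRearr_iff (hx : AEMeasurable x μI) {t : ℝ} (ht : t ∈ Ioo 0 1) (s : ℝ) :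
    s < decRearr x t ↔ t < distFun x s := by
  have hd : ∀ r, distFun x r = 1 - cdf (Measure.map x μI) r := fun r => by
    rw [cdf_map_eq_one_sub hx, distFun_eq_measureReal]
    ring
  have hset : {r | distFun x r ≤ t} = {r | 1 - t ≤ cdf (Measure.map x μI) r} := by
    ext r
    simp only [mem_ofPred_eq, hd]
    constructor <;> intro <;> linarith
  rw [decRearr, hset, lt_sInf_setOf_le_cdf_iff (by linarith [ht.2]) (by linarith [ht.1]), hd]
  constructor <;> intro <;> linarith

lemma decRearr_antitoneOn (hx : AEMeasurable x μI) : AntitoneOn (decRearr x) (Ioo 0 1) :=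
  fun _ ht₁ _ ht₂ h => le_of_forall_lt fun s hs =>
    (lt_decRearr_iff hx ht₁ s).2 (h.trans_lt ((lt_decRearr_iff hx ht₂ s).1 hs))

lemma decRearr_nonneg (hx : AEMeasurable x μI) (hx₀ : ∀ᵐ t ∂μI, 0 ≤ x t) :
    ∀ t ∈ Ioo (0 : ℝ) 1, 0 ≤ decRearr x t := by
  intro t ht
  refine le_of_forall_lt fun s hs => (lt_decRearr_iff hx ht s).2 ?_
  have hnull : μI (x ⁻¹' Ioi s)ᶜ = 0 := measure_eq_zero_iff_ae_notMem.2 <| by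
    filter_upwards [hx₀] with r hr
    simpa using hs.trans_le hr
  rw [distFun_eq_measureReal, measureReal_congr (ae_eq_univ.2 hnull), probReal_univ]
  exact ht.2

lemma preimage_decRearr_Ioi_inter (hx : AEMeasurable x μI) (s : ℝ) :
    decRearr x ⁻¹' Ioi s ∩ Ioo 0 1 = Ioo 0 (distFun x s) := by
  ext t
  constructor
  · rintro ⟨hs, ht⟩
    exact ⟨ht.1, (lt_decRearr_iff hx ht s).1 hs⟩
  · rintro ⟨ht₀, hts⟩
    have ht : t ∈ Ioo (0 : ℝ) 1 := ⟨ht₀, hts.trans_le (distFun_le_one x s)⟩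
    exact ⟨(lt_decRearr_iff hx ht s).2 hts, ht⟩

theorem identDistrib_decRearr (hx : AEMeasurable x μI) :
    IdentDistrib x (decRearr x) μI μI := by
  have hx' : AEMeasurable (decRearr x) μI :=
    aemeasurable_restrict_of_antitoneOn measurableSet_Ioo (decRearr_antitoneOn hx)
  refine ⟨hx, hx', ?_⟩
  have := Measure.isProbabilityMeasure_map hx
  have := Measure.isProbabilityMeasure_map hx'
  refine Measure.eq_of_cdf _ _ (StieltjesFunction.ext fun s => ?_)
  rw [cdf_map_eq_one_sub hx, cdf_map_eq_one_sub hx', ← distFun_eq_measureReal, measureReal_def,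
    Measure.restrict_apply' measurableSet_Ioo, preimage_decRearr_Ioi_inter hx, ← measureReal_def,
    Real.volume_real_Ioo_of_le (distFun_nonneg x s), sub_zero]

end Rearrangement

section LayerCake

variable {α : Type*} [MeasurableSpace α] {μ : Measure α} [SFinite μ] {ψ h : α → ℝ} {k : ℝ}

lemma integral_mul_eq_integral_setIntegral_lt_of_measurable (hψ : Measurable ψ)
    (hψk : ∀ᵐ t ∂μ, ψ t ∈ Icc 0 k) (hh : Integrable h μ) :
    ∫ t, ψ t * h t ∂μ = ∫ u in Ioc 0 k, ∫ t in {t | u < ψ t}, h t ∂μ := by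
  set F : α → ℝ → ℝ := fun t u =>
    {p : α × ℝ | p.2 < ψ p.1}.indicator (fun p => h p.1) (t, u)
  have hF : Integrable (Function.uncurry F) (μ.prod (volume.restrict (Ioc 0 k))) :=
    (hh.comp_fst _).indicator (measurableSet_lt measurable_snd (hψ.comp measurable_fst))
  have hF_u : ∀ t u, F t u = (Iio (ψ t)).indicator (fun _ => h t) u := fun t u => by
    simp [F, indicator_apply]
  have hF_t : ∀ t u, F t u = {t | u < ψ t}.indicator h t := fun t u => by
    simp [F, indicator_apply]
  calc ∫ t, ψ t * h t ∂μ = ∫ t, (∫ u in Ioc 0 k, F t u) ∂μ := by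
        refine integral_congr_ae ?_
        filter_upwards [hψk] with t ht
        have hIoo : Iio (ψ t) ∩ Ioc 0 k = Ioo 0 (ψ t) := by
          ext u
          simp only [mem_inter_iff, mem_Iio, mem_Ioc, mem_Ioo]
          constructor
          · rintro ⟨hu, hu₀, -⟩
            exact ⟨hu₀, hu⟩
          · rintro ⟨hu₀, hu⟩
            exact ⟨hu, hu₀, hu.le.trans ht.2⟩
        simp only [hF_u, integral_indicator measurableSet_Iio, setIntegral_const,
          Measure.restrict_restrict measurableSet_Iio, hIoo, Real.volume_real_Ioo_of_le ht.1,
          sub_zero, smul_eq_mul]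
    _ = ∫ u in Ioc 0 k, ∫ t, F t u ∂μ := integral_integral_swap hF
    _ = ∫ u in Ioc 0 k, ∫ t in {t | u < ψ t}, h t ∂μ := by
        simp only [hF_t, integral_indicator (measurableSet_lt measurable_const hψ)]

lemma integral_mul_eq_integral_setIntegral_lt (hψ : AEMeasurable ψ μ)
    (hψk : ∀ᵐ t ∂μ, ψ t ∈ Icc 0 k) (hh : Integrable h μ) :
    ∫ t, ψ t * h t ∂μ = ∫ u in Ioc 0 k, ∫ t in {t | u < ψ t}, h t ∂μ := by
  have hψ' := hψ.ae_eq_mk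
  calc ∫ t, ψ t * h t ∂μ = ∫ t, hψ.mk ψ t * h t ∂μ := by
        refine integral_congr_ae ?_
        filter_upwards [hψ'] with t ht
        rw [ht]
    _ = ∫ u in Ioc 0 k, ∫ t in {t | u < hψ.mk ψ t}, h t ∂μ := by
        refine integral_mul_eq_integral_setIntegral_lt_of_measurable hψ.measurable_mk ?_ hh
        filter_upwards [hψk, hψ'] with t ht ht'
        rwa [← ht']
    _ = ∫ u in Ioc 0 k, ∫ t in {t | u < ψ t}, h t ∂μ := by
        refine integral_congr_ae (ae_of_all _ fun u => setIntegral_congr_set ?_)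
        filter_upwards [hψ'] with t ht
        change (u < _) = (u < _)
        rw [ht]

end LayerCake

section UnitInterval

lemma exists_ae_eq_Ioo_of_monotoneOn {ψ : ℝ → ℝ} (hψ : MonotoneOn ψ (Ioo 0 1)) (u : ℝ) :
    ∃ a ∈ Icc (0 : ℝ) 1, {t | u < ψ t} =ᵐ[volume.restrict (Ioo 0 1)] Ioo a 1 := by
  -- Inserting `1` covers an empty superlevel set, with `a = 1`.
  set T := insert 1 {t | t ∈ Ioo (0 : ℝ) 1 ∧ u < ψ t}
  have hT : BddBelow T := ⟨0, by rintro t (rfl | ht); exacts [zero_le_one, ht.1.1.le]⟩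
  refine ⟨sInf T, ⟨le_csInf (insert_nonempty _ _) ?_, csInf_le hT (mem_insert _ _)⟩, ?_⟩
  · rintro t (rfl | ht)
    exacts [zero_le_one, ht.1.1.le]
  rw [eventuallyEq_set, ae_restrict_iff' measurableSet_Ioo]
  filter_upwards [Measure.ae_ne volume (sInf T)] with t hta ht
  constructor
  · intro hu
    exact ⟨(csInf_le hT (mem_insert_of_mem _ ⟨ht, hu⟩)).lt_of_ne' hta, ht.2⟩
  · rintro ⟨hat, -⟩
    obtain ⟨r, hr | hr, hrt⟩ := exists_lt_of_csInf_lt (insert_nonempty _ _) hat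
    · exact absurd ht.2 (hr ▸ hrt).not_gt
    · exact hr.2.trans_le (hψ hr.1 ht hrt.le)

variable {h : ℝ → ℝ}

lemma setIntegral_Ioo_one_nonpos (hh : IntegrableOn h (Ioo 0 1))
    (hpar : ∀ s ∈ Ico (0 : ℝ) 1, 0 ≤ ∫ t in Ioo 0 s, h t) (htot : ∫ t in Ioo 0 1, h t = 0)
    {a : ℝ} (ha : a ∈ Icc (0 : ℝ) 1) : ∫ t in Ioo a 1, h t ≤ 0 := by
  rcases ha.2.eq_or_lt with rfl | ha₁
  · simp
  have hsplit := setIntegral_union (disjoint_left.2 fun t h₁ h₂ => h₂.1.not_ge h₁.2)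
    measurableSet_Ioo (hh.mono_set (Ioc_subset_Ioo_right ha₁))
    (hh.mono_set (Ioo_subset_Ioo_left ha.1))
  rw [Ioc_union_Ioo_eq_Ioo ha.1 ha₁, htot, integral_Ioc_eq_integral_Ioo] at hsplit
  linarith [hpar a ⟨ha.1, ha₁⟩]

theorem setIntegral_mul_nonpos_of_monotoneOn (hh : IntegrableOn h (Ioo 0 1))
    (hpar : ∀ s ∈ Ico (0 : ℝ) 1, 0 ≤ ∫ t in Ioo 0 s, h t) (htot : ∫ t in Ioo 0 1, h t = 0)
    {ψ : ℝ → ℝ} {k : ℝ} (hψ : MonotoneOn ψ (Ioo 0 1))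
    (hψk : ∀ t ∈ Ioo (0 : ℝ) 1, ψ t ∈ Icc 0 k) : ∫ t in Ioo 0 1, ψ t * h t ≤ 0 := by
  rw [integral_mul_eq_integral_setIntegral_lt
    (aemeasurable_restrict_of_monotoneOn measurableSet_Ioo hψ)
    (ae_restrict_of_forall_mem measurableSet_Ioo hψk) hh]
  refine integral_nonpos fun u => ?_
  obtain ⟨a, ha, hT⟩ := exists_ae_eq_Ioo_of_monotoneOn hψ u
  rw [Measure.restrict_congr_set hT, Measure.restrict_restrict measurableSet_Ioo,
    inter_eq_left.2 (Ioo_subset_Ioo_left ha.1)]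
  exact setIntegral_Ioo_one_nonpos hh hpar htot ha

end UnitInterval

section LogRate

/-- `E log (1 + c z)` for `z` exponential with mean one, so that by definition
`Cno σ ρ W = W * ∫ f in Ioo 0 1, logRate (ρ / W * σ f)`. -/
noncomputable def logRate (c : ℝ) : ℝ := ∫ z in Ioi (0 : ℝ), log (1 + c * z) * exp (-z)

/-- The derivative of `logRate`. -/
noncomputable def logRateSlope (c : ℝ) : ℝ := ∫ z in Ioi (0 : ℝ), z / (1 + c * z) * exp (-z)

lemma measurable_logRate : Measurable logRate :=
  (Measurable.stronglyMeasurable (by fun_prop : Measurable fun p : ℝ × ℝ =>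
    log (1 + p.1 * p.2) * exp (-p.2))).integral_prod_right'.measurable

lemma integrableOn_Ioi_mul_exp_neg : IntegrableOn (fun z => z * exp (-z)) (Ioi 0) :=
  (GammaIntegral_convergent two_pos).congr_fun (fun z _ => by norm_num [mul_comm])
    measurableSet_Ioi

lemma integral_Ioi_mul_exp_neg : ∫ z in Ioi (0 : ℝ), z * exp (-z) = 1 := by
  rw [← Gamma_two, Gamma_eq_integral two_pos]
  refine setIntegral_congr_fun measurableSet_Ioi fun z _ => ?_
  norm_num [mul_comm]

lemma integrableOn_Ioi_of_le_mul_exp_neg {f : ℝ → ℝ} {C : ℝ} (hf : Measurable f)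
    (hf₀ : ∀ z > 0, 0 ≤ f z) (hfC : ∀ z > 0, f z ≤ C * (z * exp (-z))) :
    IntegrableOn f (Ioi 0) := by
  refine (integrableOn_Ioi_mul_exp_neg.const_mul C).mono' hf.aestronglyMeasurable ?_
  filter_upwards [ae_restrict_mem measurableSet_Ioi] with z hz
  rw [norm_of_nonneg (hf₀ z hz)]
  exact hfC z hz

variable {c d : ℝ}

lemma integrableOn_log_one_add_mul_exp_neg (hc : 0 ≤ c) :
    IntegrableOn (fun z => log (1 + c * z) * exp (-z)) (Ioi 0) := by
  refine integrableOn_Ioi_of_le_mul_exp_neg (C := c) (by fun_prop) (fun z hz => ?_) fun z hz => ?_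
  · have := mul_nonneg hc hz.le
    exact mul_nonneg (log_nonneg (by linarith)) (exp_pos _).le
  · rw [← mul_assoc]
    exact mul_le_mul_of_nonneg_right ((log_le_sub_one_of_pos (by positivity)).trans_eq (by ring))
      (exp_pos _).le

lemma integrableOn_div_one_add_mul_exp_neg (hc : 0 ≤ c) :
    IntegrableOn (fun z => z / (1 + c * z) * exp (-z)) (Ioi 0) := by
  refine integrableOn_Ioi_of_le_mul_exp_neg (C := 1) (by fun_prop) (fun z hz => ?_) fun z hz => ?_
  · positivity
  · rw [one_mul]
    exact mul_le_mul_of_nonneg_right (div_le_self hz.le (by nlinarith [mul_nonneg hc hz.le]))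
      (exp_pos _).le

lemma logRateSlope_nonneg (hc : 0 ≤ c) : 0 ≤ logRateSlope c :=
  setIntegral_nonneg measurableSet_Ioi fun z (hz : 0 < z) => by positivity

lemma logRateSlope_le_one (hc : 0 ≤ c) : logRateSlope c ≤ 1 := by
  rw [← integral_Ioi_mul_exp_neg]
  refine setIntegral_mono_on (integrableOn_div_one_add_mul_exp_neg hc)
    integrableOn_Ioi_mul_exp_neg measurableSet_Ioi fun z (hz : 0 < z) => ?_
  exact mul_le_mul_of_nonneg_right (div_le_self hz.le (by nlinarith [mul_nonneg hc hz.le]))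
    (exp_pos _).le

lemma logRateSlope_antitoneOn : AntitoneOn logRateSlope (Ici 0) := fun c hc d hd hcd => by
  refine setIntegral_mono_on (integrableOn_div_one_add_mul_exp_neg hd)
    (integrableOn_div_one_add_mul_exp_neg hc) measurableSet_Ioi fun z (hz : 0 < z) => ?_
  have : 0 ≤ c * z := mul_nonneg hc hz.le
  gcongr

lemma logRate_sub_le (hc : 0 ≤ c) (hd : 0 ≤ d) :
    logRate d - logRate c ≤ logRateSlope c * (d - c) := by
  rw [logRate, logRate, logRateSlope, ← integral_sub (integrableOn_log_one_add_mul_exp_neg hd)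
    (integrableOn_log_one_add_mul_exp_neg hc), ← integral_mul_const]
  refine setIntegral_mono_on ((integrableOn_log_one_add_mul_exp_neg hd).sub
    (integrableOn_log_one_add_mul_exp_neg hc))
    ((integrableOn_div_one_add_mul_exp_neg hc).mul_const _) measurableSet_Ioi
    fun z (hz : 0 < z) => ?_
  have hcz : 0 < 1 + c * z := by nlinarith [mul_nonneg hc hz.le]
  have hdz : 0 < 1 + d * z := by nlinarith [mul_nonneg hd hz.le]
  have hlog := log_le_sub_one_of_pos (div_pos hdz hcz)
  rw [log_div hdz.ne' hcz.ne'] at hlog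
  have key : (1 + d * z) / (1 + c * z) - 1 = (d - c) * (z / (1 + c * z)) := by
    field_simp
    ring
  calc log (1 + d * z) * exp (-z) - log (1 + c * z) * exp (-z)
      = (log (1 + d * z) - log (1 + c * z)) * exp (-z) := by ring
    _ ≤ ((d - c) * (z / (1 + c * z))) * exp (-z) :=
        mul_le_mul_of_nonneg_right (hlog.trans_eq key) (exp_pos _).le
    _ = z / (1 + c * z) * exp (-z) * (d - c) := by ring

lemma logRate_zero : logRate 0 = 0 := by simp [logRate]

lemma logRateSlope_zero : logRateSlope 0 = 1 := by simp [logRateSlope, integral_Ioi_mul_exp_neg]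

lemma logRate_nonneg (hc : 0 ≤ c) : 0 ≤ logRate c := by
  have := logRate_sub_le hc le_rfl
  nlinarith [logRateSlope_nonneg hc, logRate_zero]

lemma logRate_le_self (hc : 0 ≤ c) : logRate c ≤ c := by
  have := logRate_sub_le le_rfl hc
  rw [logRate_zero, logRateSlope_zero] at this
  linarith

end LogRate

lemma Integrable.logRate_const_mul {α : Type*} [MeasurableSpace α] {μ : Measure α} {x : α → ℝ}
    {k : ℝ} (hk : 0 ≤ k) (hx : Integrable x μ) (hx₀ : ∀ᵐ t ∂μ, 0 ≤ x t) :
    Integrable (fun t => logRate (k * x t)) μ := by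
  refine (hx.const_mul k).mono'
    (measurable_logRate.comp_aemeasurable (hx.aemeasurable.const_mul k)).aestronglyMeasurable ?_
  filter_upwards [hx₀] with t ht
  have hkx := mul_nonneg hk ht
  rw [norm_of_nonneg (logRate_nonneg hkx)]
  exact logRate_le_self hkx

theorem setIntegral_logRate_mul_le_of_integral_Ioo_le {x y : ℝ → ℝ} {k : ℝ} (hk : 0 ≤ k)
    (hx₀ : ∀ t ∈ Ioo (0 : ℝ) 1, 0 ≤ x t) (hy₀ : ∀ t ∈ Ioo (0 : ℝ) 1, 0 ≤ y t)
    (hx : IntegrableOn x (Ioo 0 1)) (hy : IntegrableOn y (Ioo 0 1))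
    (hy_anti : AntitoneOn y (Ioo 0 1))
    (hpar : ∀ s ∈ Ico (0 : ℝ) 1, ∫ t in Ioo 0 s, y t ≤ ∫ t in Ioo 0 s, x t)
    (htot : ∫ t in Ioo 0 1, x t = ∫ t in Ioo 0 1, y t) :
    ∫ t in Ioo 0 1, logRate (k * x t) ≤ ∫ t in Ioo 0 1, logRate (k * y t) := by
  -- `ψ t` is a supergradient of `a ↦ logRate (k * a)` at `y t`, increasing in `t` since `y` is
  -- decreasing and `logRate` is concave.
  set ψ : ℝ → ℝ := fun t => k * logRateSlope (k * y t)
  have hψ : MonotoneOn ψ (Ioo 0 1) := fun s hs t ht hst =>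
    mul_le_mul_of_nonneg_left (logRateSlope_antitoneOn (mul_nonneg hk (hy₀ t ht))
      (mul_nonneg hk (hy₀ s hs)) (mul_le_mul_of_nonneg_left (hy_anti hs ht hst) hk)) hk
  have hψk : ∀ t ∈ Ioo (0 : ℝ) 1, ψ t ∈ Icc 0 k := fun t ht =>
    ⟨mul_nonneg hk (logRateSlope_nonneg (mul_nonneg hk (hy₀ t ht))),
      mul_le_of_le_one_right hk (logRateSlope_le_one (mul_nonneg hk (hy₀ t ht)))⟩
  have hψx : ∀ t ∈ Ioo (0 : ℝ) 1, logRate (k * x t) - logRate (k * y t) ≤ ψ t * (x t - y t) :=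
    fun t ht => (logRate_sub_le (mul_nonneg hk (hy₀ t ht)) (mul_nonneg hk (hx₀ t ht))).trans_eq
      (by ring)
  have hlx := Integrable.logRate_const_mul hk hx
    (ae_restrict_of_forall_mem measurableSet_Ioo hx₀)
  have hly := Integrable.logRate_const_mul hk hy
    (ae_restrict_of_forall_mem measurableSet_Ioo hy₀)
  have hψ_int : IntegrableOn (fun t => ψ t * (x t - y t)) (Ioo 0 1) :=
    (hx.sub hy).bdd_mul (c := k)
      (aemeasurable_restrict_of_monotoneOn measurableSet_Ioo hψ).aestronglyMeasurable
      (ae_restrict_of_forall_mem measurableSet_Ioo fun t ht => by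
        rw [norm_of_nonneg (hψk t ht).1]
        exact (hψk t ht).2)
  have hpar' : ∀ s ∈ Ico (0 : ℝ) 1, 0 ≤ ∫ t in Ioo 0 s, (x t - y t) := fun s hs => by
    rw [integral_sub (hx.mono_set (Ioo_subset_Ioo_right hs.2.le))
      (hy.mono_set (Ioo_subset_Ioo_right hs.2.le))]
    linarith [hpar s hs]
  have htot' : ∫ t in Ioo 0 1, (x t - y t) = 0 := by
    rw [integral_sub hx hy, htot, sub_self]
  have hsub : (∫ t in Ioo 0 1, logRate (k * x t)) - ∫ t in Ioo 0 1, logRate (k * y t) ≤ 0 := by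
    rw [← integral_sub hlx hly]
    exact (setIntegral_mono_on (hlx.sub hly) hψ_int measurableSet_Ioo hψx).trans
      (setIntegral_mul_nonpos_of_monotoneOn (hx.sub hy) hpar' htot' hψ hψk)
  linarith

lemma Cno_eq_setIntegral_logRate_decRearr {σ : ℝ → ℝ}
    (hσ : AEMeasurable σ (volume.restrict (Ioo (0 : ℝ) 1))) (ρ W : ℝ) :
    Cno σ ρ W = W * ∫ t in Ioo 0 1, logRate (ρ / W * decRearr σ t) :=
  congrArg (W * ·) ((identDistrib_decRearr hσ).comp
    (measurable_logRate.comp (measurable_const_mul (ρ / W)))).integral_eq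

/-- If `σ₁ ⪰ σ₂` then `C_no(σ₁,ρ,W) ≤ C_no(σ₂,ρ,W)`: Schur-concavity of the average rate
with no transmitter CSI in the spectral fading variance. -/
theorem Cno_schur_concave (σ₁ σ₂ : ℝ → ℝ)
    (h₁nonneg : ∀ f ∈ Ioo (0 : ℝ) 1, 0 ≤ σ₁ f)
    (h₂nonneg : ∀ f ∈ Ioo (0 : ℝ) 1, 0 ≤ σ₂ f)
    (h₁cont : ContinuousOn σ₁ (Ioo 0 1))
    (h₂cont : ContinuousOn σ₂ (Ioo 0 1))
    (h₁int : IntegrableOn σ₁ (Ioo 0 1))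
    (h₂int : IntegrableOn σ₂ (Ioo 0 1))
    (hmaj : Majorizes σ₁ σ₂)
    (ρ W : ℝ) (hρ : 0 ≤ ρ) (hW : 0 < W) :
    Cno σ₁ ρ W ≤ Cno σ₂ ρ W := by
  have hσ₁ : AEMeasurable σ₁ (volume.restrict (Ioo 0 1)) :=
    h₁cont.aemeasurable measurableSet_Ioo
  have hσ₂ : AEMeasurable σ₂ (volume.restrict (Ioo 0 1)) :=
    h₂cont.aemeasurable measurableSet_Ioo
  rw [Cno_eq_setIntegral_logRate_decRearr hσ₁, Cno_eq_setIntegral_logRate_decRearr hσ₂]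
  refine mul_le_mul_of_nonneg_left ?_ hW.le
  exact setIntegral_logRate_mul_le_of_integral_Ioo_le (div_nonneg hρ hW.le)
    (decRearr_nonneg hσ₁ (ae_restrict_of_forall_mem measurableSet_Ioo h₁nonneg))
    (decRearr_nonneg hσ₂ (ae_restrict_of_forall_mem measurableSet_Ioo h₂nonneg))
    ((identDistrib_decRearr hσ₁).integrable_snd h₁int)
    ((identDistrib_decRearr hσ₂).integrable_snd h₂int)
    (decRearr_antitoneOn hσ₂) hmaj.1 hmaj.2
end

section
/- Let W > 0 and let σ* : (0,1) → (0,∞) be continuous, strictly decreasing, with finite right limit σ*(0+) at 0. Let ψ⁻¹ : (0,1] → [0,∞) denote the inverse of ψ (for u ∈ (0,1], ψ⁻¹(u) is the unique y ≥ 0 with ψ(y) = u). For ρ > 0 and ν > 0 define the power allocation p_{ρ,ν}(f) = (1/(ρ·σ*(f)))·ψ⁻¹(ν/(ρ·σ*(f))) if ν < ρ·σ*(f), and p_{ρ,ν}(f) = 0 otherwise. Suppose ν : (0,∞) → (0,∞) is a function such that ∫₀^1 p_{ρ,ν(ρ)}(f) df = 1/W for every ρ > 0, and define the volume of active frequencies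 θ(ρ) = μ({f ∈ (0,1) : p_{ρ,ν(ρ)}(f) > 0}), where μ is Lebesgue measure. Then for every ε > 0 there exists ρ̃ > 0 such that θ(ρ) < ε for all ρ ∈ (0, ρ̃). -/
open MeasureTheory Real Set

/-- `ψ(x) = ∫₀^∞ z e^{-z}/(1+xz) dz = E[z/(1+xz)]` for exponential `z` with mean one. -/
noncomputable def psi (x : ℝ) : ℝ :=
  ∫ z in Ioi (0 : ℝ), z * Real.exp (-z) / (1 + x * z)

/-- The water-filling power allocation determined by the KKT conditions:
`p_{ρ,ν}(f) = (1/(ρ σ*(f))) ψ⁻¹(ν/(ρ σ*(f)))` when `ν < ρ σ*(f)` and `0` otherwise. -/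
noncomputable def palloc (σs psiInv : ℝ → ℝ) (ρ nu f : ℝ) : ℝ :=
  if nu < ρ * σs f then (1 / (ρ * σs f)) * psiInv (nu / (ρ * σs f)) else 0

/-- Volume of active frequencies `θ(ρ) = μ({f ∈ (0,1) : p_{ρ,ν(ρ)}(f) > 0})`. -/
noncomputable def activeVolume (σs psiInv ν : ℝ → ℝ) (ρ : ℝ) : ℝ :=
  (volume {f | f ∈ Ioo (0 : ℝ) 1 ∧ 0 < palloc σs psiInv ρ (ν ρ) f}).toReal

/-! Let `δ = min ε 1`. If `θ(ρ) > 3δ/4`, some frequency `f₀ > 3δ/4` is active: `ν < ρ σ*(f₀)`.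
Since σ* decreases, `ν/(ρ σ*(f))` then stays below the fixed ratio
`u₀ = σ*(3δ/4)/σ*(δ/2) < 1` on `(δ/4, δ/2)`, and the elementary bound `ψ(y) ≥ 1 - 2y`
gives `ψ⁻¹(u) ≥ (1 - u₀)/2` there. So the allocation is at least a constant times `1/ρ` on an
interval of fixed length, and its integral exceeds the budget `1/W` once `ρ` is small. -/

lemma integrableOn_pow_mul_exp_neg_Ioi (n : ℕ) :
    IntegrableOn (fun z : ℝ => z ^ n * exp (-z)) (Ioi 0) := by
  refine (GammaIntegral_convergent (Nat.cast_add_one_pos n)).congr_fun (fun z _ => ?_)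
    measurableSet_Ioi
  simp [mul_comm]

lemma integral_pow_mul_exp_neg_Ioi (n : ℕ) :
    ∫ z in Ioi (0 : ℝ), z ^ n * exp (-z) = n.factorial := by
  rw [← Gamma_nat_eq_factorial, Gamma_eq_integral (Nat.cast_add_one_pos n)]
  refine setIntegral_congr_fun measurableSet_Ioi fun z _ => ?_
  simp [mul_comm]

lemma integrableOn_psi_integrand {y : ℝ} (hy : 0 ≤ y) :
    IntegrableOn (fun z => z * exp (-z) / (1 + y * z)) (Ioi 0) := by
  have hden : ∀ z ∈ Ioi (0 : ℝ), 0 < 1 + y * z := fun z hz => by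
    have : (0 : ℝ) < z := hz; positivity
  have hdom : IntegrableOn (fun z : ℝ => z * exp (-z)) (Ioi 0) := by
    simpa using integrableOn_pow_mul_exp_neg_Ioi 1
  refine Integrable.mono hdom ?_ ?_
  · refine ContinuousOn.aestronglyMeasurable ?_ measurableSet_Ioi
    exact ContinuousOn.div (by fun_prop) (by fun_prop) fun z hz => (hden z hz).ne'
  · filter_upwards [ae_restrict_mem measurableSet_Ioi] with z hz
    have hz' : (0 : ℝ) < z := hz
    rw [norm_of_nonneg (div_nonneg (by positivity) (hden z hz).le),
      norm_of_nonneg (by positivity), div_le_iff₀ (hden z hz)]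
    nlinarith [mul_nonneg (mul_nonneg hz'.le (exp_pos (-z)).le) (mul_nonneg hy hz'.le)]

/-- From `1/(1 + t) ≥ 1 - t` and the exponential moments `E z = 1`, `E z² = 2`. -/
lemma one_sub_two_mul_le_psi {y : ℝ} (hy : 0 ≤ y) : 1 - 2 * y ≤ psi y := by
  have hint₁ := integrableOn_pow_mul_exp_neg_Ioi 1
  have hint₂ := (integrableOn_pow_mul_exp_neg_Ioi 2).const_mul y
  have hmoments :
      ∫ z in Ioi (0 : ℝ), (z ^ 1 * exp (-z) - y * (z ^ 2 * exp (-z))) = 1 - 2 * y := by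
    rw [integral_sub hint₁ hint₂, integral_const_mul, integral_pow_mul_exp_neg_Ioi,
      integral_pow_mul_exp_neg_Ioi]
    norm_num
    ring
  rw [← hmoments]
  refine setIntegral_mono_on (hint₁.sub hint₂) (integrableOn_psi_integrand hy)
    measurableSet_Ioi fun z hz => ?_
  have hz' : (0 : ℝ) < z := hz
  rw [le_div_iff₀ (by positivity)]
  nlinarith [mul_nonneg (mul_nonneg (mul_nonneg hy hy) (pow_pos hz' 3).le) (exp_pos (-z)).le]

lemma mul_measureReal_le_setIntegral {X : Type*} [MeasurableSpace X] {μ : Measure X}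
    {f : X → ℝ} {s t : Set X} {m : ℝ} (hts : t ⊆ s) (ht : MeasurableSet t) (hμt : μ t ≠ ⊤)
    (hf : IntegrableOn f s μ) (hf_nonneg : ∀ x, 0 ≤ f x) (hm : ∀ x ∈ t, m ≤ f x) :
    m * μ.real t ≤ ∫ x in s, f x ∂μ :=
  (setIntegral_ge_of_const_le_real ht hμt hm (hf.mono_set hts)).trans
    (setIntegral_mono_set hf (.of_forall hf_nonneg) hts.eventuallyLE)

section Allocation

variable {σs psiInv : ℝ → ℝ} {ρ nu f : ℝ}

lemma lt_mul_of_palloc_pos (h : 0 < palloc σs psiInv ρ nu f) : nu < ρ * σs f := by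
  by_contra hf
  simp [palloc, hf] at h

lemma activeVolume_le_of_inactive {ν : ℝ → ℝ} {c : ℝ} (hc : 0 ≤ c)
    (hinactive : ∀ f ∈ Ioo c 1, ¬ ν ρ < ρ * σs f) : activeVolume σs psiInv ν ρ ≤ c := by
  have hsub : {f | f ∈ Ioo (0 : ℝ) 1 ∧ 0 < palloc σs psiInv ρ (ν ρ) f} ⊆ Ioc 0 c :=
    fun f ⟨hf, hpos⟩ =>
      ⟨hf.1, not_lt.1 fun hcf => hinactive f ⟨hcf, hf.2⟩ (lt_mul_of_palloc_pos hpos)⟩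
  calc activeVolume σs psiInv ν ρ ≤ volume.real (Ioc 0 c) :=
        measureReal_mono hsub measure_Ioc_lt_top.ne
    _ = c := by rw [volume_real_Ioc_of_le hc, sub_zero]

variable (hpsiInv : ∀ u ∈ Ioc (0 : ℝ) 1, 0 ≤ psiInv u ∧ psi (psiInv u) = u)
include hpsiInv

lemma palloc_nonneg (hnu : 0 < nu) : 0 ≤ palloc σs psiInv ρ nu f := by
  unfold palloc
  split_ifs with hf
  · have hpos : 0 < ρ * σs f := hnu.trans hf
    exact mul_nonneg (by positivity)
      (hpsiInv _ ⟨div_pos hnu hpos, (div_le_one hpos).2 hf.le⟩).1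
  · exact le_rfl

lemma one_sub_div_div_le_palloc (hnu : 0 < nu) (hf : nu < ρ * σs f) :
    (1 - nu / (ρ * σs f)) / 2 / (ρ * σs f) ≤ palloc σs psiInv ρ nu f := by
  have hpos : 0 < ρ * σs f := hnu.trans hf
  obtain ⟨hnonneg, hψ⟩ :=
    hpsiInv (nu / (ρ * σs f)) ⟨div_pos hnu hpos, (div_le_one hpos).2 hf.le⟩
  have hbound := one_sub_two_mul_le_psi hnonneg
  rw [palloc, if_pos hf, one_div_mul_eq_div]
  gcongr
  linarith

variable (hσpos : ∀ f ∈ Ioo (0 : ℝ) 1, 0 < σs f) (hσanti : StrictAntiOn σs (Ioo 0 1))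
include hσpos hσanti

lemma div_le_palloc_of_active
    {a b c f₀ g : ℝ} (ha : 0 < a) (hbc : b < c) (hf₀ : f₀ ∈ Ioo c 1) (hg : g ∈ Ioo a b)
    (hρ : 0 < ρ) (hnu : 0 < nu) (hactive : nu < ρ * σs f₀) :
    (1 - σs c / σs b) / 2 / σs a / ρ ≤ palloc σs psiInv ρ nu g := by
  have hc : c ∈ Ioo (0 : ℝ) 1 := ⟨by linarith [hg.1, hg.2], hf₀.1.trans hf₀.2⟩
  have hb : b ∈ Ioo (0 : ℝ) 1 := ⟨by linarith [hg.1, hg.2], hbc.trans hc.2⟩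
  have hg' : g ∈ Ioo (0 : ℝ) 1 := ⟨ha.trans hg.1, hg.2.trans hb.2⟩
  have ha' : a ∈ Ioo (0 : ℝ) 1 := ⟨ha, hg.1.trans hg'.2⟩
  have hσag : σs g < σs a := hσanti ha' hg' hg.1
  have hσgb : σs b < σs g := hσanti hg' hb hg.2
  have hσbc : σs c < σs b := hσanti hb hc hbc
  have hσcf : σs f₀ < σs c := hσanti hc ⟨hc.1.trans hf₀.1, hf₀.2⟩ hf₀.1
  have hσg := hσpos g hg'
  have hσb := hσpos b hb
  have hgactive : nu < ρ * σs g := hactive.trans (by gcongr; linarith)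
  have hratio : nu / (ρ * σs g) ≤ σs c / σs b := by
    rw [div_le_div_iff₀ (by positivity) hσb]
    calc nu * σs b ≤ ρ * σs c * σs b := by gcongr; nlinarith
      _ ≤ ρ * σs c * σs g := mul_le_mul_of_nonneg_left hσgb.le (mul_pos hρ (hσpos c hc)).le
      _ = σs c * (ρ * σs g) := by ring
  have hu₀ : 0 ≤ 1 - σs c / σs b := by rw [sub_nonneg, div_le_one hσb]; exact hσbc.le
  calc (1 - σs c / σs b) / 2 / σs a / ρ = (1 - σs c / σs b) / 2 / (ρ * σs a) := by
        rw [div_div, mul_comm]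
    _ ≤ (1 - nu / (ρ * σs g)) / 2 / (ρ * σs g) := by gcongr; linarith
    _ ≤ palloc σs psiInv ρ nu g := one_sub_div_div_le_palloc hpsiInv hnu hgactive

lemma le_snr_of_active {W a b c f₀ : ℝ} (hW : 0 < W) (ha : 0 < a) (hab : a < b) (hbc : b < c)
    (hf₀ : f₀ ∈ Ioo c 1) (hρ : 0 < ρ) (hnu : 0 < nu)
    (hpower : ∫ f in Ioo (0 : ℝ) 1, palloc σs psiInv ρ nu f = 1 / W)
    (hactive : nu < ρ * σs f₀) :
    W * (b - a) * ((1 - σs c / σs b) / 2 / σs a) ≤ ρ := by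
  have hint : IntegrableOn (palloc σs psiInv ρ nu) (Ioo 0 1) :=
    Integrable.of_integral_ne_zero (by rw [hpower]; positivity)
  have hbudget : (1 - σs c / σs b) / 2 / σs a / ρ * (b - a) ≤ 1 / W :=
    calc (1 - σs c / σs b) / 2 / σs a / ρ * (b - a)
        = (1 - σs c / σs b) / 2 / σs a / ρ * volume.real (Ioo a b) := by
          rw [volume_real_Ioo_of_le hab.le]
      _ ≤ ∫ f in Ioo (0 : ℝ) 1, palloc σs psiInv ρ nu f :=
          mul_measureReal_le_setIntegral (Ioo_subset_Ioo ha.le (by linarith [hf₀.1, hf₀.2]))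
            measurableSet_Ioo measure_Ioo_lt_top.ne hint (fun _ => palloc_nonneg hpsiInv hnu)
            fun g hg => div_le_palloc_of_active hpsiInv hσpos hσanti ha hbc hf₀ hg hρ hnu hactive
      _ = 1 / W := hpower
  rw [div_mul_eq_mul_div, div_le_div_iff₀ hρ hW] at hbudget
  linarith

end Allocation

theorem activeVolume_small_for_small_snr_general (W : ℝ) (hW : 0 < W)
    (σs : ℝ → ℝ)
    (hσpos : ∀ f ∈ Ioo (0 : ℝ) 1, 0 < σs f)
    (hσanti : StrictAntiOn σs (Ioo 0 1))
    (psiInv : ℝ → ℝ)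
    (hpsiInv : ∀ u ∈ Ioc (0 : ℝ) 1, 0 ≤ psiInv u ∧ psi (psiInv u) = u)
    (ν : ℝ → ℝ) (hνpos : ∀ ρ : ℝ, 0 < ρ → 0 < ν ρ)
    (hνpower : ∀ ρ : ℝ, 0 < ρ →
      (∫ f in Ioo (0 : ℝ) 1, palloc σs psiInv ρ (ν ρ) f) = 1 / W) :
    ∀ ε > 0, ∃ ρt > 0, ∀ ρ : ℝ, 0 < ρ → ρ < ρt →
      activeVolume σs psiInv ν ρ < ε := by
  intro ε hε
  obtain ⟨δ, hδ, hδε, hδ1⟩ : ∃ δ > 0, δ ≤ ε ∧ δ ≤ 1 :=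
    ⟨min ε 1, by positivity, min_le_left _ _, min_le_right _ _⟩
  have hmem : ∀ t ∈ Ioo (0 : ℝ) 1, t * δ ∈ Ioo (0 : ℝ) 1 := fun t ht =>
    ⟨by nlinarith [ht.1], by nlinarith [ht.2]⟩
  set κ := (1 - σs (3 / 4 * δ) / σs (1 / 2 * δ)) / 2 / σs (1 / 4 * δ)
  have hκ : 0 < κ := by
    have hσb := hσpos _ (hmem (1 / 2) (by norm_num))
    have hσbc := hσanti (hmem (1 / 2) (by norm_num)) (hmem (3 / 4) (by norm_num)) (by linarith)
    have hratio : σs (3 / 4 * δ) / σs (1 / 2 * δ) < 1 := (div_lt_one hσb).2 hσbc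
    exact div_pos (by linarith) (hσpos _ (hmem (1 / 4) (by norm_num)))
  refine ⟨W * (1 / 2 * δ - 1 / 4 * δ) * κ, mul_pos (mul_pos hW (by linarith)) hκ,
    fun ρ hρ hρt => ?_⟩
  have hinactive : ∀ f ∈ Ioo (3 / 4 * δ) 1, ¬ ν ρ < ρ * σs f := fun f₀ hf₀ hactive =>
    hρt.not_ge <| le_snr_of_active hpsiInv hσpos hσanti hW (by positivity) (by linarith)
      (by linarith) hf₀ hρ (hνpos ρ hρ) (hνpower ρ hρ) hactive
  calc activeVolume σs psiInv ν ρ ≤ 3 / 4 * δ :=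
        activeVolume_le_of_inactive (by positivity) hinactive
    _ < ε := by linarith

/-- For every `ε > 0` there is `ρ̃ > 0` with `θ(ρ) < ε` for all `ρ ∈ (0,ρ̃)`:
the volume of active frequencies vanishes as the SNR tends to zero. -/
theorem activeVolume_small_for_small_snr (W : ℝ) (hW : 0 < W)
    (σs : ℝ → ℝ)
    (hσpos : ∀ f ∈ Ioo (0 : ℝ) 1, 0 < σs f)
    (hσcont : ContinuousOn σs (Ioo 0 1))
    (hσanti : StrictAntiOn σs (Ioo 0 1))
    (L : ℝ) (hσlim : Filter.Tendsto σs (nhdsWithin 0 (Ioi 0)) (nhds L))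
    (psiInv : ℝ → ℝ)
    (hpsiInv : ∀ u ∈ Ioc (0 : ℝ) 1, 0 ≤ psiInv u ∧ psi (psiInv u) = u)
    (ν : ℝ → ℝ) (hνpos : ∀ ρ : ℝ, 0 < ρ → 0 < ν ρ)
    (hνpower : ∀ ρ : ℝ, 0 < ρ →
      (∫ f in Ioo (0 : ℝ) 1, palloc σs psiInv ρ (ν ρ) f) = 1 / W) :
    ∀ ε > 0, ∃ ρt > 0, ∀ ρ : ℝ, 0 < ρ → ρ < ρt →
      activeVolume σs psiInv ν ρ < ε :=
  activeVolume_small_for_small_snr_general W hW σs hσpos hσanti psiInv hpsiInv ν hνpos hνpower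
end

section
/- Let a, b, c > 0 and set d = a + b. Then for every f ∈ ℝ, 2·∫₀^∞ ∫₀^∞ c·e^{−a|τ−τ'|}·b·e^{−b(τ+τ')}·cos(2π(τ−τ')f) dτ dτ' = 2·c·d/(d² + (2πf)²). In particular, the spectral fading variance σ̂(f) = 2∫∫ R(τ,τ')cos(2π(τ−τ')f) dτ dτ' of the exponentially attenuated Ornstein–Uhlenbeck channel model equals 2cd/(d² + (2πf)²). -/
/-!
The integrand is `g (τ - τ') e^{-b(τ + τ')}` with `g s = c b e^{-a|s|} cos (2π f s)` even, so
the integral over the quadrant is, by Fubini, twice the integral over the half `τ > τ'`. There the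
shift `τ = τ' + s` separates the variables: the `τ'`-integral of `e^{-2bτ'}` is `1/(2b)`, and the
`s`-integral is the Laplace transform of `cos (2π f s)` at `a + b`, which is
`(a + b) / ((a + b)² + (2π f)²)`.
-/

open MeasureTheory Real Set Function

theorem integral_Ioi_eq_integral_Ioi_zero_add {E : Type*} [NormedAddCommGroup E]
    [NormedSpace ℝ E] (g : ℝ → E) (t : ℝ) :
    ∫ x in Ioi t, g x = ∫ s in Ioi 0, g (s + t) := by
  rw [← (measurePreserving_add_right volume t).setIntegral_preimage_emb
    (measurableEmbedding_addRight t), preimage_add_const_Ioi, sub_self]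

theorem integral_exp_neg_mul_mul_cos_Ioi {d : ℝ} (hd : 0 < d) (ω : ℝ) :
    ∫ s in Ioi (0 : ℝ), exp (-d * s) * cos (ω * s) = d / (d ^ 2 + ω ^ 2) := by
  have hz : (-d + ω * Complex.I).re < 0 := by simpa using hd
  have hre : ∀ s : ℝ, exp (-d * s) * cos (ω * s) =
      RCLike.re (Complex.exp ((-d + ω * Complex.I) * s)) := by
    intro s
    rw [show (-d + ω * Complex.I) * s = ((-d * s : ℝ) : ℂ) + ((ω * s : ℝ) : ℂ) * Complex.I by
      push_cast; ring, RCLike.re_to_complex, Complex.exp_re]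
    simp
  simp_rw [hre]
  rw [integral_re (integrableOn_exp_mul_complex_Ioi hz 0), integral_exp_mul_complex_Ioi hz 0]
  simp only [Complex.ofReal_zero, mul_zero, Complex.exp_zero, RCLike.re_to_complex, Complex.div_re,
    Complex.neg_re, Complex.one_re, Complex.add_re, Complex.ofReal_re, Complex.mul_re, Complex.I_re,
    Complex.ofReal_im, Complex.I_im, mul_one, sub_self, add_zero, mul_neg, neg_mul, one_mul, neg_neg,
    Complex.normSq_apply, Complex.add_im, Complex.neg_im, neg_zero, Complex.mul_im, zero_add,
    Complex.one_im, zero_mul, zero_div]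
  field_simp

section SymmetricQuadrant

variable {E : Type*} [NormedAddCommGroup E] [NormedSpace ℝ E] {F : ℝ → ℝ → E} {t : ℝ}

theorem integral_prod_restrict_Ioi_indicator (I : ℝ → Set ℝ) (hI : ∀ y, t < y → I y ⊆ Ioi t)
    (hmeas : MeasurableSet {z : ℝ × ℝ | z.1 ∈ I z.2})
    (hF : Integrable (uncurry F) ((volume.restrict (Ioi t)).prod (volume.restrict (Ioi t)))) :
    ∫ z, {z : ℝ × ℝ | z.1 ∈ I z.2}.indicator (uncurry F) z
        ∂(volume.restrict (Ioi t)).prod (volume.restrict (Ioi t)) =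
      ∫ y in Ioi t, ∫ x in I y, F x y := by
  rw [integral_prod_symm _ (hF.indicator hmeas)]
  refine setIntegral_congr_fun measurableSet_Ioi fun y hy => ?_
  change ∫ x in Ioi t, (I y).indicator (fun x => F x y) x = _
  have hIy : MeasurableSet (I y) := measurable_prodMk_right hmeas
  rw [setIntegral_indicator hIy, inter_eq_right.2 (hI y hy)]

theorem integral_Ioi_Ioi_eq_two_smul_of_symm (hsymm : ∀ x y, F x y = F y x)
    (hF : IntegrableOn (uncurry F) (Ioi t ×ˢ Ioi t)) :
    ∫ y in Ioi t, ∫ x in Ioi t, F x y = (2 : ℝ) • ∫ y in Ioi t, ∫ x in Ioi y, F x y := by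
  let μ := volume.restrict (Ioi t)
  have hρ : Integrable (uncurry F) (μ.prod μ) := by
    rwa [IntegrableOn, Measure.volume_eq_prod, ← Measure.prod_restrict] at hF
  let U := {z : ℝ × ℝ | z.1 ∈ Ioi z.2}
  let V := {z : ℝ × ℝ | z.1 ∈ Ici z.2}
  have hU : MeasurableSet U := measurableSet_lt measurable_snd measurable_fst
  have hV : MeasurableSet V := measurableSet_le measurable_snd measurable_fst
  have hswap : ∀ z : ℝ × ℝ, uncurry F z.swap = uncurry F z := fun z => hsymm _ _
  have hUV : ∀ z, U.indicator (uncurry F) z + V.indicator (uncurry F) z.swap = uncurry F z := by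
    intro z
    by_cases h : z.2 < z.1
    · simp [U, V, h, h.not_ge]
    · simp [U, V, h, not_lt.1 h, hswap]
  calc ∫ y in Ioi t, ∫ x in Ioi t, F x y
      = ∫ z, uncurry F z ∂μ.prod μ := (integral_prod_symm _ hρ).symm
    _ = ∫ z, U.indicator (uncurry F) z ∂μ.prod μ + ∫ z, V.indicator (uncurry F) z ∂μ.prod μ := by
        rw [← integral_prod_swap (V.indicator (uncurry F)),
          ← integral_add (hρ.indicator hU)
            ((hρ.indicator hV).swap : Integrable (fun z => V.indicator (uncurry F) z.swap) _)]
        simp only [hUV]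
    _ = (2 : ℝ) • ∫ y in Ioi t, ∫ x in Ioi y, F x y := by
        rw [integral_prod_restrict_Ioi_indicator Ioi (fun y hy => Ioi_subset_Ioi hy.le) hU hρ,
          integral_prod_restrict_Ioi_indicator Ici (fun y hy => Ici_subset_Ioi.2 hy) hV hρ]
        simp only [integral_Ici_eq_integral_Ioi, two_smul]

end SymmetricQuadrant

section StationaryKernel

variable {g : ℝ → ℝ} {b : ℝ}

theorem integrableOn_comp_sub_mul_exp_add (hg : Continuous g) {C : ℝ} (hC : ∀ s, |g s| ≤ C)
    (hb : 0 < b) (t : ℝ) :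
    IntegrableOn (fun z : ℝ × ℝ => g (z.1 - z.2) * exp (-b * (z.1 + z.2))) (Ioi t ×ˢ Ioi t) := by
  have hexp : IntegrableOn (fun x => exp (-b * x)) (Ioi t) :=
    integrableOn_exp_mul_Ioi (neg_neg_iff_pos.2 hb) t
  rw [IntegrableOn, Measure.volume_eq_prod, ← Measure.prod_restrict]
  refine ((hexp.mul_prod hexp).const_mul C).mono' (by fun_prop) (.of_forall fun z => ?_)
  rw [norm_mul, norm_of_nonneg (exp_pos _).le, mul_add, exp_add]
  exact mul_le_mul_of_nonneg_right (hC _) (by positivity)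

theorem integral_Ioi_Ioi_comp_sub_mul_exp_add (hg : Continuous g) (heven : ∀ s, g (-s) = g s)
    {C : ℝ} (hC : ∀ s, |g s| ≤ C) (hb : 0 < b) :
    ∫ y in Ioi 0, ∫ x in Ioi 0, g (x - y) * exp (-b * (x + y)) =
      (∫ s in Ioi 0, g s * exp (-b * s)) / b := by
  have hsymm : ∀ x y, g (x - y) * exp (-b * (x + y)) = g (y - x) * exp (-b * (y + x)) := by
    intro x y
    rw [← heven, neg_sub, add_comm]
  have hhalf : ∀ y, ∫ x in Ioi y, g (x - y) * exp (-b * (x + y)) =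
      (∫ s in Ioi 0, g s * exp (-b * s)) * exp (-(2 * b) * y) := by
    intro y
    rw [integral_Ioi_eq_integral_Ioi_zero_add, ← integral_mul_const]
    refine integral_congr_ae (.of_forall fun s => ?_)
    simp only [add_sub_cancel_right, mul_assoc, ← exp_add]
    ring_nf
  rw [integral_Ioi_Ioi_eq_two_smul_of_symm hsymm
      (integrableOn_comp_sub_mul_exp_add hg hC hb 0), smul_eq_mul]
  simp only [hhalf, integral_const_mul,
    integral_exp_mul_Ioi (neg_neg_iff_pos.2 (mul_pos two_pos hb)) 0]
  field_simp
  simp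

end StationaryKernel

/-- The spectral fading variance of the exponentially attenuated Ornstein–Uhlenbeck
channel model: with `R(τ,τ') = c e^{-a|τ-τ'|} b e^{-b(τ+τ')}` on `τ,τ' ≥ 0` and `d = a+b`,
`σ̂(f) = 2∬ R(τ,τ') cos(2π(τ-τ')f) dτ dτ' = 2cd/(d² + (2πf)²)`. -/
theorem ou_spectral_fading_variance (a b c : ℝ) (ha : 0 < a) (hb : 0 < b) (hc : 0 < c)
    (f : ℝ) :
    2 * ∫ τ' in Ioi (0 : ℝ), ∫ τ in Ioi (0 : ℝ),
        c * Real.exp (-a * |τ - τ'|) * b * Real.exp (-b * (τ + τ')) *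
          Real.cos (2 * π * (τ - τ') * f) =
      2 * c * (a + b) / ((a + b) ^ 2 + (2 * π * f) ^ 2) := by
  let g : ℝ → ℝ := fun s => c * b * (exp (-a * |s|) * cos (2 * π * f * s))
  have hg : Continuous g := by fun_prop
  have heven : ∀ s, g (-s) = g s := fun s => by simp only [g, abs_neg, mul_neg, cos_neg]
  have hbound : ∀ s, |g s| ≤ c * b := fun s => by
    rw [abs_mul, abs_of_pos (mul_pos hc hb), abs_mul, abs_of_pos (exp_pos _)]
    refine mul_le_of_le_one_right (mul_pos hc hb).le
      (mul_le_one₀ ?_ (abs_nonneg _) (abs_cos_le_one _))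
    exact exp_le_one_iff.2 (by nlinarith [abs_nonneg s])
  have hlaplace : ∫ s in Ioi 0, g s * exp (-b * s) =
      c * b * ((a + b) / ((a + b) ^ 2 + (2 * π * f) ^ 2)) := by
    rw [← integral_exp_neg_mul_mul_cos_Ioi (add_pos ha hb), ← integral_const_mul]
    refine setIntegral_congr_fun measurableSet_Ioi fun s hs => ?_
    simp only [g, abs_of_pos (show 0 < s from hs)]
    rw [show -(a + b) * s = -a * s + -b * s by ring, exp_add]
    ring
  have hkernel : ∀ τ τ', c * exp (-a * |τ - τ'|) * b * exp (-b * (τ + τ')) *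
      cos (2 * π * (τ - τ') * f) = g (τ - τ') * exp (-b * (τ + τ')) := fun τ τ' => by
    simp only [g]; ring_nf
  simp_rw [hkernel]
  rw [integral_Ioi_Ioi_comp_sub_mul_exp_add hg heven hbound hb, hlaplace]
  field_simp
end

section
/- Let W > 0 and 0 < d₁ < d₂. Then σ_{d₁} majorizes σ_{d₂}; explicitly, with σ_d*(f) = (π d / arctan(πW/d)) · 1/(d² + (πW f)²), one has ∫₀^s σ_{d₁}*(f) df ≥ ∫₀^s σ_{d₂}*(f) df for all s ∈ [0,1) and ∫₀^1 σ_{d₁}*(f) df = ∫₀^1 σ_{d₂}*(f) df = 1/W. -/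
/-!
With `k = π W / d`, the substitution `u = k f` gives `∫₀^s σ_d* = arctan (k s) / arctan k / W`,
so both totals are `1 / W`; since `k` decreases as `d` grows, the partial-integral inequality
says that `k ↦ arctan (k s) / arctan k` is increasing for `0 ≤ s ≤ 1`. The derivative of this
quotient has the sign of `s (1 + k²) arctan k - (1 + (k s)²) arctan (k s)`, which is `k s` times
the increment of `x ↦ (x + x⁻¹) arctan x` from `k s` to `k`; that function is increasing on
`(0, ∞)` because `arctan x ≤ x`.
-/

open MeasureTheory Real Set

/-- Decreasing rearrangement of the attenuated OU spectral fading variance. -/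
noncomputable def sigmaDStar (d W f : ℝ) : ℝ :=
  (π * d / Real.arctan (π * W / d)) * (1 / (d ^ 2 + (π * W * f) ^ 2))

lemma Real.arctan_le_self {x : ℝ} (hx : 0 ≤ x) : arctan x ≤ x := by
  simpa only [tan_arctan] using le_tan (arctan_nonneg.2 hx) (arctan_lt_pi_div_two x)

lemma monotoneOn_Ioi_of_hasDerivAt_nonneg {f f' : ℝ → ℝ} {a : ℝ}
    (hf : ∀ x ∈ Ioi a, HasDerivAt f (f' x) x) (hf' : ∀ x ∈ Ioi a, 0 ≤ f' x) :
    MonotoneOn f (Ioi a) := by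
  refine monotoneOn_of_hasDerivWithinAt_nonneg (f' := f') (convex_Ioi a)
    (fun x hx => (hf x hx).continuousAt.continuousWithinAt) ?_ ?_ <;> rw [interior_Ioi]
  · exact fun x hx => (hf x hx).hasDerivWithinAt
  · exact hf'

lemma monotoneOn_add_inv_mul_arctan : MonotoneOn (fun x : ℝ => (x + x⁻¹) * arctan x) (Ioi 0) := by
  refine monotoneOn_Ioi_of_hasDerivAt_nonneg (f' := fun x => ((x ^ 2 - 1) * arctan x + x) / x ^ 2)
    (fun x (hx : 0 < x) => ?_) (fun x (hx : 0 < x) => ?_)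
  · refine ((hasDerivAt_id' x).fun_add (hasDerivAt_inv hx.ne')).fun_mul (hasDerivAt_arctan x)
      |>.congr_deriv ?_
    field_simp
    ring
  · have h₀ : 0 ≤ arctan x := arctan_nonneg.2 hx.le
    have h₁ : arctan x ≤ x := arctan_le_self hx.le
    refine div_nonneg ?_ (sq_nonneg x)
    rcases le_total x 1 with hx1 | hx1
    · nlinarith [mul_le_mul_of_nonneg_left h₁ (by nlinarith : (0 : ℝ) ≤ 1 - x ^ 2)]
    · nlinarith [mul_nonneg (by nlinarith : (0 : ℝ) ≤ x ^ 2 - 1) h₀]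

lemma one_add_sq_mul_arctan_le {x s : ℝ} (hx : 0 < x) (hs₀ : 0 ≤ s) (hs₁ : s ≤ 1) :
    (1 + (x * s) ^ 2) * arctan (x * s) ≤ s * ((1 + x ^ 2) * arctan x) := by
  rcases hs₀.eq_or_lt with rfl | hs
  · simp
  have hxs : 0 < x * s := mul_pos hx hs
  calc (1 + (x * s) ^ 2) * arctan (x * s)
      = x * s * ((x * s + (x * s)⁻¹) * arctan (x * s)) := by field_simp; ring
    _ ≤ x * s * ((x + x⁻¹) * arctan x) := by
        gcongr x * s * ?_
        exact monotoneOn_add_inv_mul_arctan hxs hx (mul_le_of_le_one_right hx.le hs₁)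
    _ = s * ((1 + x ^ 2) * arctan x) := by field_simp; ring

lemma monotoneOn_arctan_mul_div_arctan {s : ℝ} (hs₀ : 0 ≤ s) (hs₁ : s ≤ 1) :
    MonotoneOn (fun x => arctan (x * s) / arctan x) (Ioi 0) := by
  refine monotoneOn_Ioi_of_hasDerivAt_nonneg
    (f' := fun x => (1 / (1 + (x * s) ^ 2) * s * arctan x - arctan (x * s) * (1 / (1 + x ^ 2)))
      / arctan x ^ 2) (fun x (hx : 0 < x) => ?_) (fun x (hx : 0 < x) => ?_)
  · exact ((hasDerivAt_mul_const s).arctan).div (hasDerivAt_arctan x)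
      (arctan_pos.2 hx).ne'
  · have hnum : (1 / (1 + (x * s) ^ 2) * s) * arctan x - arctan (x * s) * (1 / (1 + x ^ 2))
        = (s * ((1 + x ^ 2) * arctan x) - (1 + (x * s) ^ 2) * arctan (x * s))
          / ((1 + (x * s) ^ 2) * (1 + x ^ 2)) := by
      field_simp
    refine div_nonneg ?_ (sq_nonneg _)
    rw [hnum]
    exact div_nonneg (sub_nonneg.2 (one_add_sq_mul_arctan_le hx hs₀ hs₁)) (by positivity)

lemma integral_sigmaDStar {d W s : ℝ} (hd : d ≠ 0) (hW : W ≠ 0) (hs : 0 ≤ s) :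
    ∫ f in Ioo 0 s, sigmaDStar d W f = arctan (π * W / d * s) / arctan (π * W / d) / W := by
  set k := π * W / d with hk_def
  have hk : k ≠ 0 := by positivity
  have hA : arctan k ≠ 0 := arctan_eq_zero_iff.not.2 hk
  have hσ : sigmaDStar d W = fun f => k / (W * arctan k) * (1 + (k * f) ^ 2)⁻¹ := by
    funext f
    simp only [sigmaDStar, hk_def]
    field_simp
  rw [← integral_Ioc_eq_integral_Ioo, ← intervalIntegral.integral_of_le hs, hσ,
    intervalIntegral.integral_const_mul,
    intervalIntegral.integral_comp_mul_left (fun y => (1 + y ^ 2)⁻¹) hk]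
  simp only [integral_inv_one_add_sq, mul_zero, arctan_zero, sub_zero, smul_eq_mul]
  field_simp

/-- For `0 < d₁ < d₂`, `σ_{d₁}` majorizes `σ_{d₂}`: the partial integrals of the decreasing
rearrangements are ordered and both total integrals equal `1/W`. -/
theorem sigmaD_majorizes (W d₁ d₂ : ℝ) (hW : 0 < W) (hd₁ : 0 < d₁) (hd : d₁ < d₂) :
    (∀ s ∈ Ico (0 : ℝ) 1,
        (∫ f in Ioo (0 : ℝ) s, sigmaDStar d₂ W f) ≤ ∫ f in Ioo (0 : ℝ) s, sigmaDStar d₁ W f) ∧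
      (∫ f in Ioo (0 : ℝ) 1, sigmaDStar d₁ W f) = 1 / W ∧
      (∫ f in Ioo (0 : ℝ) 1, sigmaDStar d₂ W f) = 1 / W := by
  have hd₂ : 0 < d₂ := hd₁.trans hd
  have total (d : ℝ) (hd : 0 < d) : ∫ f in Ioo (0 : ℝ) 1, sigmaDStar d W f = 1 / W := by
    have hA : arctan (π * W / d) ≠ 0 := (arctan_pos.2 (by positivity)).ne'
    rw [integral_sigmaDStar hd.ne' hW.ne' zero_le_one, mul_one, div_self hA]
  refine ⟨fun s ⟨hs₀, hs₁⟩ => ?_, total d₁ hd₁, total d₂ hd₂⟩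
  rw [integral_sigmaDStar hd₁.ne' hW.ne' hs₀, integral_sigmaDStar hd₂.ne' hW.ne' hs₀]
  gcongr ?_ / W
  exact monotoneOn_arctan_mul_div_arctan hs₀ hs₁.le (by positivity : 0 < π * W / d₂)
    (by positivity : 0 < π * W / d₁) (by gcongr)
end
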